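/- Let X and Y be independent standard normal random variables. Then for κ ∈ (0,1), E[exp(κ|XY|)] = 4∫₀^∞ (1/√(2π))·exp{−(1/2)(1−κ²)x²}·Φ(κx) dx, and this quantity is finite; moreover E[exp(κ|XY|)] = +∞ when κ ≥ 1. -/

import Mathlib

open Real MeasureTheory ProbabilityTheory

/-- The standard normal cumulative distribution function. -/
noncomputable def stdNormalCDF (x : ℝ) : ℝ :=
  ∫ t in Set.Iic x, (1 / Real.sqrt (2 * π)) * Real.exp (-t ^ 2 / 2)

/-!
Integrate out `Y` first. Exponential tilting, `φ(y) e^{a y} = e^{a²/2} φ(y - a)`, together with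
the symmetry of `φ` gives `E[e^{a|Y|}] = 2 e^{a²/2} Φ(a)`. Taking `a = κ|x|` and integrating
against `φ(x)`, the factor `e^{κ²x²/2}` combines with `φ(x)` into `e^{-(1-κ²)x²/2}/√(2π)`,
an even integrand. For `κ < 1` it is integrable, which gives the formula; for `κ ≥ 1` it is
bounded below on `(0, ∞)` by `Φ(0)/√(2π) > 0`, so the expectation is infinite.
-/

open Set
open scoped ENNReal NNReal

lemma lintegral_comp_abs {f : ℝ → ℝ≥0∞} (hf : Measurable f) :
    ∫⁻ x, f |x| = 2 * ∫⁻ x in Ioi 0, f x := by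
  have h_split : (fun x ↦ f |x|) =ᵐ[volume]
      fun x ↦ (Ioi 0).indicator f x + (Ioi 0).indicator f (-x) := by
    filter_upwards [compl_mem_ae_iff.mpr (measure_singleton (0 : ℝ))] with x hx
    rcases Ne.lt_or_gt hx with hx | hx
    · simp [indicator, hx, hx.not_gt, abs_of_neg hx]
    · simp [indicator, hx, abs_of_pos hx, (neg_neg_of_pos hx).not_gt]
  rw [lintegral_congr_ae h_split, lintegral_add_left (hf.indicator measurableSet_Ioi),
    lintegral_neg_eq_self (fun x ↦ (Ioi 0).indicator f x), ← two_mul,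
    lintegral_indicator measurableSet_Ioi]

lemma gaussianPDFReal_mul_exp (μ : ℝ) (v : ℝ≥0) (a y : ℝ) :
    gaussianPDFReal μ v y * rexp (a * y)
      = rexp (μ * a + v * a ^ 2 / 2) * gaussianPDFReal (μ + v * a) v y := by
  rcases eq_or_ne v 0 with rfl | hv
  · simp
  have hv' : (v : ℝ) ≠ 0 := by exact_mod_cast hv
  have h_exponent : -(y - μ) ^ 2 / (2 * v) + a * y
      = (μ * a + v * a ^ 2 / 2) + -(y - (μ + v * a)) ^ 2 / (2 * v) := by
    field_simp
    ring
  simp only [gaussianPDFReal]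
  rw [mul_assoc, ← Real.exp_add, h_exponent, Real.exp_add]
  ring

lemma gaussianPDFReal_zero_one (x : ℝ) :
    gaussianPDFReal 0 1 x = 1 / √(2 * π) * rexp (-x ^ 2 / 2) := by
  simp [gaussianPDFReal]

lemma stdNormalCDF_eq_cdf : stdNormalCDF = cdf (gaussianReal 0 1) := by
  funext x
  rw [cdf_eq_real, measureReal_def, gaussianReal_apply_eq_integral 0 one_ne_zero,
    ENNReal.toReal_ofReal (setIntegral_nonneg measurableSet_Iic
      fun t _ ↦ gaussianPDFReal_nonneg 0 1 t)]
  simp only [stdNormalCDF, gaussianPDFReal_zero_one]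

lemma ofReal_stdNormalCDF (x : ℝ) :
    ENNReal.ofReal (stdNormalCDF x) = gaussianReal 0 1 (Iic x) := by
  rw [stdNormalCDF_eq_cdf, ofReal_cdf]

lemma stdNormalCDF_pos (x : ℝ) : 0 < stdNormalCDF x := by
  rw [← ENNReal.ofReal_pos, ofReal_stdNormalCDF, pos_iff_ne_zero]
  intro h
  simpa using gaussianReal_absolutelyContinuous' 0 one_ne_zero h

lemma stdNormalCDF_nonneg (x : ℝ) : 0 ≤ stdNormalCDF x :=
  stdNormalCDF_eq_cdf ▸ cdf_nonneg _ x

lemma stdNormalCDF_le_one (x : ℝ) : stdNormalCDF x ≤ 1 :=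
  stdNormalCDF_eq_cdf ▸ cdf_le_one _ x

lemma monotone_stdNormalCDF : Monotone stdNormalCDF :=
  stdNormalCDF_eq_cdf ▸ monotone_cdf _

@[fun_prop]
lemma measurable_stdNormalCDF : Measurable stdNormalCDF :=
  monotone_stdNormalCDF.measurable

lemma gaussianReal_Ioi_zero (a : ℝ) :
    gaussianReal a 1 (Ioi 0) = ENNReal.ofReal (stdNormalCDF a) := by
  have : NullSingletonClass (gaussianReal 0 1) := nullSingletonClass_gaussianReal one_ne_zero
  rw [← sub_zero a, ← gaussianReal_map_const_sub, Measure.map_apply (by fun_prop) measurableSet_Ioi,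
    ofReal_stdNormalCDF, sub_zero]
  have h_preimage : (fun x ↦ a - x) ⁻¹' Ioi 0 = Iio a := by ext; simp
  rw [h_preimage, measure_congr Iio_ae_eq_Iic]

lemma lintegral_ofReal_gaussianReal (μ : ℝ) {v : ℝ≥0} (hv : v ≠ 0) (g : ℝ → ℝ) :
    ∫⁻ x, ENNReal.ofReal (g x) ∂gaussianReal μ v
      = ∫⁻ x, ENNReal.ofReal (gaussianPDFReal μ v x * g x) := by
  rw [gaussianReal_of_var_ne_zero _ hv, lintegral_withDensity_eq_lintegral_mul_non_measurable _
    (measurable_gaussianPDF μ v) (ae_of_all _ fun _ ↦ gaussianPDF_lt_top)]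
  simp only [Pi.mul_apply, gaussianPDF, ENNReal.ofReal_mul (gaussianPDFReal_nonneg μ v _)]

lemma gaussianPDFReal_zero_abs (v : ℝ≥0) (x : ℝ) :
    gaussianPDFReal 0 v |x| = gaussianPDFReal 0 v x := by
  simp [gaussianPDFReal]

lemma lintegral_exp_mul_abs_gaussianReal (a : ℝ) :
    ∫⁻ y, ENNReal.ofReal (rexp (a * |y|)) ∂gaussianReal 0 1
      = ENNReal.ofReal (2 * rexp (a ^ 2 / 2) * stdNormalCDF a) := by
  rw [lintegral_ofReal_gaussianReal 0 one_ne_zero]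
  have h_abs := lintegral_comp_abs
    (f := fun t ↦ ENNReal.ofReal (gaussianPDFReal 0 1 t * rexp (a * t))) (by fun_prop)
  simp only [gaussianPDFReal_zero_abs] at h_abs
  rw [h_abs]
  simp_rw [gaussianPDFReal_mul_exp, ENNReal.ofReal_mul (Real.exp_pos _).le]
  rw [lintegral_const_mul _ (by fun_prop)]
  simp only [zero_mul, zero_add, NNReal.coe_one, one_mul]
  rw [← gaussianPDF_def, ← gaussianReal_apply a one_ne_zero, gaussianReal_Ioi_zero,
    ENNReal.ofReal_mul (by positivity), ENNReal.ofReal_mul zero_le_two, ENNReal.ofReal_ofNat,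
    mul_assoc]

noncomputable def expAbsProdIntegrand (κ x : ℝ) : ℝ :=
  1 / √(2 * π) * rexp (-(1 / 2) * (1 - κ ^ 2) * x ^ 2) * stdNormalCDF (κ * x)

@[fun_prop]
lemma measurable_expAbsProdIntegrand (κ : ℝ) : Measurable (expAbsProdIntegrand κ) := by
  unfold expAbsProdIntegrand
  fun_prop

lemma expAbsProdIntegrand_nonneg (κ x : ℝ) : 0 ≤ expAbsProdIntegrand κ x := by
  unfold expAbsProdIntegrand
  have := stdNormalCDF_nonneg (κ * x)
  positivity

lemma gaussianPDFReal_mul_two_exp_mul_stdNormalCDF (κ x : ℝ) :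
    gaussianPDFReal 0 1 x * (2 * rexp ((κ * |x|) ^ 2 / 2) * stdNormalCDF (κ * |x|))
      = 2 * expAbsProdIntegrand κ |x| := by
  rw [gaussianPDFReal_zero_one, expAbsProdIntegrand, mul_pow, sq_abs,
    show -(1 / 2) * (1 - κ ^ 2) * x ^ 2 = -x ^ 2 / 2 + κ ^ 2 * x ^ 2 / 2 by ring, Real.exp_add]
  ring

lemma lintegral_exp_mul_abs_mul_gaussianReal_prod (κ : ℝ) :
    ∫⁻ p : ℝ × ℝ, ENNReal.ofReal (rexp (κ * |p.1 * p.2|))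
        ∂((gaussianReal 0 1).prod (gaussianReal 0 1))
      = 4 * ∫⁻ x in Ioi 0, ENNReal.ofReal (expAbsProdIntegrand κ x) := by
  rw [lintegral_prod _ (by fun_prop)]
  simp_rw [abs_mul, ← mul_assoc, lintegral_exp_mul_abs_gaussianReal,
    lintegral_ofReal_gaussianReal 0 one_ne_zero, gaussianPDFReal_mul_two_exp_mul_stdNormalCDF]
  rw [lintegral_comp_abs (f := fun t ↦ ENNReal.ofReal (2 * expAbsProdIntegrand κ t))
    (by fun_prop)]
  simp_rw [ENNReal.ofReal_mul zero_le_two, ENNReal.ofReal_ofNat]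
  rw [lintegral_const_mul _ (by fun_prop), ← mul_assoc]
  norm_num

lemma integrable_expAbsProdIntegrand {κ : ℝ} (hκ : |κ| < 1) :
    Integrable (expAbsProdIntegrand κ) := by
  have h_rate : 0 < 1 / 2 * (1 - κ ^ 2) := by
    have := (sq_lt_one_iff_abs_lt_one κ).mpr hκ
    linarith
  have h_gauss : Integrable fun x ↦ 1 / √(2 * π) * rexp (-(1 / 2) * (1 - κ ^ 2) * x ^ 2) := by
    simpa only [neg_mul] using (integrable_exp_neg_mul_sq h_rate).const_mul (1 / √(2 * π))
  refine h_gauss.mono' (measurable_expAbsProdIntegrand κ).aestronglyMeasurable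
    (ae_of_all _ fun x ↦ ?_)
  rw [Real.norm_of_nonneg (expAbsProdIntegrand_nonneg κ x), expAbsProdIntegrand]
  exact mul_le_of_le_one_right (by positivity) (stdNormalCDF_le_one _)

lemma stdNormalCDF_zero_div_le_expAbsProdIntegrand {κ x : ℝ} (hκ : 1 ≤ κ) (hx : 0 ≤ x) :
    stdNormalCDF 0 / √(2 * π) ≤ expAbsProdIntegrand κ x := by
  have h_exp : 1 ≤ rexp (-(1 / 2) * (1 - κ ^ 2) * x ^ 2) := by
    refine Real.one_le_exp ?_
    have : 1 ≤ κ ^ 2 := one_le_pow₀ hκ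
    have := sq_nonneg x
    nlinarith
  have h_cdf : stdNormalCDF 0 ≤ stdNormalCDF (κ * x) :=
    monotone_stdNormalCDF (by positivity)
  rw [expAbsProdIntegrand, div_eq_inv_mul, one_div, mul_assoc]
  gcongr
  exact h_cdf.trans (le_mul_of_one_le_left (stdNormalCDF_pos _).le h_exp)

lemma setLIntegral_expAbsProdIntegrand_eq_top {κ : ℝ} (hκ : 1 ≤ κ) :
    ∫⁻ x in Ioi 0, ENNReal.ofReal (expAbsProdIntegrand κ x) = ∞ := by
  refine eq_top_iff.mpr ?_
  calc ∞ = ∫⁻ _ in Ioi (0 : ℝ), ENNReal.ofReal (stdNormalCDF 0 / √(2 * π)) := by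
        rw [setLIntegral_const, Real.volume_Ioi, ENNReal.mul_top]
        exact (ENNReal.ofReal_pos.mpr (by have := stdNormalCDF_pos 0; positivity)).ne'
    _ ≤ _ := setLIntegral_mono' measurableSet_Ioi fun x hx ↦
        ENNReal.ofReal_le_ofReal (stdNormalCDF_zero_div_le_expAbsProdIntegrand hκ hx.le)

theorem stmt_5 :
    (∀ κ : ℝ, κ ∈ Set.Ioo (0:ℝ) 1 →
      (∫⁻ p : ℝ × ℝ, ENNReal.ofReal (Real.exp (κ * |p.1 * p.2|))
          ∂((gaussianReal 0 1).prod (gaussianReal 0 1)))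
        = ENNReal.ofReal (4 * ∫ x in Set.Ioi (0:ℝ),
            (1 / Real.sqrt (2 * π)) * Real.exp (-(1/2) * (1 - κ ^ 2) * x ^ 2) *
              stdNormalCDF (κ * x)) ∧
      (∫⁻ p : ℝ × ℝ, ENNReal.ofReal (Real.exp (κ * |p.1 * p.2|))
          ∂((gaussianReal 0 1).prod (gaussianReal 0 1))) < ⊤) ∧
    (∀ κ : ℝ, 1 ≤ κ →
      (∫⁻ p : ℝ × ℝ, ENNReal.ofReal (Real.exp (κ * |p.1 * p.2|))
          ∂((gaussianReal 0 1).prod (gaussianReal 0 1))) = ⊤) := by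
  refine ⟨fun κ ⟨hκ0, hκ1⟩ ↦ ?_, fun κ hκ ↦ ?_⟩
  · have h_int : IntegrableOn (expAbsProdIntegrand κ) (Ioi 0) :=
      (integrable_expAbsProdIntegrand (abs_lt.mpr ⟨by linarith, hκ1⟩)).integrableOn
    have h_eq : ∫⁻ p : ℝ × ℝ, ENNReal.ofReal (rexp (κ * |p.1 * p.2|))
          ∂((gaussianReal 0 1).prod (gaussianReal 0 1))
        = ENNReal.ofReal (4 * ∫ x in Ioi 0, expAbsProdIntegrand κ x) := by
      rw [lintegral_exp_mul_abs_mul_gaussianReal_prod, ← ofReal_integral_eq_lintegral_ofReal h_int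
        (ae_of_all _ (expAbsProdIntegrand_nonneg κ)), ENNReal.ofReal_mul zero_le_four,
        ENNReal.ofReal_ofNat]
    exact ⟨h_eq, h_eq ▸ ENNReal.ofReal_lt_top⟩
  · rw [lintegral_exp_mul_abs_mul_gaussianReal_prod, setLIntegral_expAbsProdIntegrand_eq_top hκ]
    exact ENNReal.mul_top four_ne_zero
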